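/- Let a > 0, r ∈ (0,1), and let f ∈ C²([0,r]) solve the profile equation on (0,r] with f(0) = a, f'(0) = 0. Assume in addition that f''(x) < 0 and f(x) > 0 for all x ∈ [0,r]. Then, for every x ∈ (0,r], one has a√(1 - x²) < f(x) < a and -ax/(1 - x²) < f'(x) < 0. -/

import Mathlib

open Set

/-- `f ∈ C²(S)` solves the profile equation
`f''(x) = (1 + f'(x)²)[f'(x)(x - 1/x) - f(x)]` for `x ∈ S \ {0}`,
with initial data `f(0) = a`, `f'(0) = 0`. -/
def SolvesProfile (a : ℝ) (S : Set ℝ) (f : ℝ → ℝ) : Prop :=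
  ContDiffOn ℝ 2 f S ∧ f 0 = a ∧ derivWithin f S 0 = 0 ∧
  ∀ x ∈ S, x ≠ 0 →
    derivWithin (derivWithin f S) S x
      = (1 + (derivWithin f S x) ^ 2) * (derivWithin f S x * (x - 1 / x) - f x)

/-!
Concavity makes `f'` decrease from `f'(0) = 0`, so `f' < 0` and `f < a` on `(0,r]`. Since
`f'' < 0` and `1 + f'² > 0`, the profile equation forces `f'(x)(x - 1/x) < f(x)`, that is
`f'(x)(1 - x²) + x f(x) > 0`. Together with `f < a` this is the bound on `f'`; it is also
exactly the positivity of the derivative of `f² / (1 - x²)`, whose growth from its value `a²`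
at `0` gives `f > a√(1 - x²)`.
-/

theorem strictAntiOn_of_derivWithin_neg {D : Set ℝ} (hD : Convex ℝ D) {f : ℝ → ℝ}
    (hf : DifferentiableOn ℝ f D) (hf' : ∀ x ∈ interior D, derivWithin f D x < 0) :
    StrictAntiOn f D :=
  strictAntiOn_of_hasDerivWithinAt_neg hD hf.continuousOn
    (fun x hx ↦ (hf x (interior_subset hx)).hasDerivWithinAt.mono interior_subset) hf'

theorem strictMonoOn_sq_div_one_sub_sq {D : Set ℝ} (hD : Convex ℝ D) {f : ℝ → ℝ}
    (hf : DifferentiableOn ℝ f D) (hD1 : ∀ x ∈ D, x ^ 2 < 1)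
    (hpos : ∀ x ∈ interior D, 0 < f x)
    (h : ∀ x ∈ interior D, 0 < derivWithin f D x * (1 - x ^ 2) + x * f x) :
    StrictMonoOn (fun x ↦ f x ^ 2 / (1 - x ^ 2)) D := by
  have hq : ∀ x ∈ D, 1 - x ^ 2 ≠ 0 := fun x hx ↦ (sub_pos.2 (hD1 x hx)).ne'
  have hderiv : ∀ x ∈ D, HasDerivWithinAt (fun x ↦ f x ^ 2 / (1 - x ^ 2))
      (2 * f x * (derivWithin f D x * (1 - x ^ 2) + x * f x) / (1 - x ^ 2) ^ 2) D x := by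
    intro x hx
    refine (((hf x hx).hasDerivWithinAt.fun_pow 2).fun_div
      (((hasDerivAt_pow 2 x).const_sub 1).hasDerivWithinAt (s := D)) (hq x hx)).congr_deriv ?_
    push_cast
    ring
  refine strictMonoOn_of_hasDerivWithinAt_pos hD
    (fun x hx ↦ (hderiv x hx).continuousWithinAt)
    (fun x hx ↦ (hderiv x (interior_subset hx)).mono interior_subset) fun x hx ↦ ?_
  have hx1 := hq x (interior_subset hx)
  exact div_pos (mul_pos (mul_pos two_pos (hpos x hx)) (h x hx)) (by positivity)

namespace SolvesProfile

variable {a : ℝ} {S : Set ℝ} {f : ℝ → ℝ}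

theorem differentiableOn (hf : SolvesProfile a S f) : DifferentiableOn ℝ f S :=
  hf.1.differentiableOn (by norm_num)

theorem differentiableOn_derivWithin (hf : SolvesProfile a S f) (hS : UniqueDiffOn ℝ S) :
    DifferentiableOn ℝ (derivWithin f S) S :=
  (hf.1.derivWithin hS (m := 1) (by norm_num)).differentiableOn (by norm_num)

theorem derivWithin_mul_one_sub_sq_add_pos (hf : SolvesProfile a S f) {x : ℝ} (hxS : x ∈ S)
    (hx : 0 < x) (hconc : derivWithin (derivWithin f S) S x < 0) :
    0 < derivWithin f S x * (1 - x ^ 2) + x * f x := by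
  rw [hf.2.2.2 x hxS hx.ne'] at hconc
  have hbracket : derivWithin f S x * (x - 1 / x) - f x < 0 :=
    neg_of_mul_neg_right hconc (by positivity)
  have hscaled : x * (derivWithin f S x * (x - 1 / x) - f x)
      = -(derivWithin f S x * (1 - x ^ 2) + x * f x) := by
    field_simp
    ring
  linarith [mul_neg_of_pos_of_neg hx hbracket]

variable {r : ℝ}

theorem derivWithin_neg_of_mem_Ioc (hf : SolvesProfile a (Icc 0 r) f) (hr : 0 < r)
    (hconc : ∀ x ∈ Ioo 0 r, derivWithin (derivWithin f (Icc 0 r)) (Icc 0 r) x < 0)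
    {x : ℝ} (hx : x ∈ Ioc 0 r) : derivWithin f (Icc 0 r) x < 0 := by
  have hanti := strictAntiOn_of_derivWithin_neg (convex_Icc 0 r)
    (hf.differentiableOn_derivWithin (uniqueDiffOn_Icc hr)) (by rwa [interior_Icc])
  simpa only [hf.2.2.1] using hanti (left_mem_Icc.2 hr.le) (Ioc_subset_Icc_self hx) hx.1

theorem apply_lt_of_mem_Ioc (hf : SolvesProfile a (Icc 0 r) f) (hr : 0 < r)
    (hconc : ∀ x ∈ Ioo 0 r, derivWithin (derivWithin f (Icc 0 r)) (Icc 0 r) x < 0)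
    {x : ℝ} (hx : x ∈ Ioc 0 r) : f x < a := by
  have hanti := strictAntiOn_of_derivWithin_neg (convex_Icc 0 r) hf.differentiableOn
    fun y hy ↦ hf.derivWithin_neg_of_mem_Ioc hr hconc (Ioo_subset_Ioc_self (by rwa [interior_Icc] at hy))
  simpa only [hf.2.1] using hanti (left_mem_Icc.2 hr.le) (Ioc_subset_Icc_self hx) hx.1

theorem mul_sqrt_one_sub_sq_lt (hf : SolvesProfile a (Icc 0 r) f) (hr : 0 < r) (hr1 : r < 1)
    (hconc : ∀ x ∈ Ioc 0 r, derivWithin (derivWithin f (Icc 0 r)) (Icc 0 r) x < 0)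
    (hpos : ∀ x ∈ Ioc 0 r, 0 < f x) {x : ℝ} (hx : x ∈ Ioc 0 r) :
    a * Real.sqrt (1 - x ^ 2) < f x := by
  have hD1 : ∀ y ∈ Icc 0 r, y ^ 2 < 1 := fun y hy ↦ by nlinarith [hy.1, hy.2]
  have hmono := strictMonoOn_sq_div_one_sub_sq (convex_Icc 0 r) hf.differentiableOn hD1
    (fun y hy ↦ hpos y (Ioo_subset_Ioc_self (by rwa [interior_Icc] at hy)))
    fun y hy ↦ by
      rw [interior_Icc] at hy
      exact hf.derivWithin_mul_one_sub_sq_add_pos (Ioo_subset_Icc_self hy) hy.1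
        (hconc y (Ioo_subset_Ioc_self hy))
  have hgrow : f 0 ^ 2 / (1 - 0 ^ 2) < f x ^ 2 / (1 - x ^ 2) :=
    hmono (left_mem_Icc.2 hr.le) (Ioc_subset_Icc_self hx) hx.1
  have hx1 : 0 < 1 - x ^ 2 := sub_pos.2 (hD1 x (Ioc_subset_Icc_self hx))
  rw [hf.2.1, zero_pow two_ne_zero, sub_zero, div_one] at hgrow
  have hsq : (a * Real.sqrt (1 - x ^ 2)) ^ 2 < f x ^ 2 := by
    rw [mul_pow, Real.sq_sqrt hx1.le]
    exact (lt_div_iff₀ hx1).1 hgrow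
  exact lt_of_abs_lt (abs_lt_of_sq_lt_sq hsq (hpos x hx).le)

end SolvesProfile

theorem profile_bounds_general (a r : ℝ) (hr0 : 0 < r) (hr1 : r < 1)
    (f : ℝ → ℝ) (hf : SolvesProfile a (Icc 0 r) f)
    (hconc : ∀ x ∈ Icc (0:ℝ) r, derivWithin (derivWithin f (Icc 0 r)) (Icc 0 r) x < 0)
    (hpos : ∀ x ∈ Icc (0:ℝ) r, 0 < f x) :
    ∀ x ∈ Ioc (0:ℝ) r,
      a * Real.sqrt (1 - x ^ 2) < f x ∧ f x < a ∧
      -(a * x) / (1 - x ^ 2) < derivWithin f (Icc 0 r) x ∧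
      derivWithin f (Icc 0 r) x < 0 := by
  intro x hx
  have hconc_Ioo := fun y (hy : y ∈ Ioo 0 r) ↦ hconc y (Ioo_subset_Icc_self hy)
  have hfa : f x < a := hf.apply_lt_of_mem_Ioc hr0 hconc_Ioo hx
  have hkey := hf.derivWithin_mul_one_sub_sq_add_pos (Ioc_subset_Icc_self hx) hx.1
    (hconc x (Ioc_subset_Icc_self hx))
  have hx1 : 0 < 1 - x ^ 2 := by nlinarith [hx.1, hx.2]
  refine ⟨hf.mul_sqrt_one_sub_sq_lt hr0 hr1 (fun y hy ↦ hconc y (Ioc_subset_Icc_self hy))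
      (fun y hy ↦ hpos y (Ioc_subset_Icc_self hy)) hx, hfa, ?_,
    hf.derivWithin_neg_of_mem_Ioc hr0 hconc_Ioo hx⟩
  rw [div_lt_iff₀ hx1]
  linarith [mul_lt_mul_of_pos_left hfa hx.1]

/-- If `f ∈ C²([0,r])` (`0 < r < 1`) solves the profile equation with `f(0) = a > 0`,
`f'(0) = 0`, and `f'' < 0`, `f > 0` on `[0,r]`, then for `x ∈ (0,r]`:
`a√(1-x²) < f(x) < a` and `-ax/(1-x²) < f'(x) < 0`. -/
theorem profile_bounds (a r : ℝ) (ha : 0 < a) (hr0 : 0 < r) (hr1 : r < 1)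
    (f : ℝ → ℝ) (hf : SolvesProfile a (Icc 0 r) f)
    (hconc : ∀ x ∈ Icc (0:ℝ) r, derivWithin (derivWithin f (Icc 0 r)) (Icc 0 r) x < 0)
    (hpos : ∀ x ∈ Icc (0:ℝ) r, 0 < f x) :
    ∀ x ∈ Ioc (0:ℝ) r,
      a * Real.sqrt (1 - x ^ 2) < f x ∧ f x < a ∧
      -(a * x) / (1 - x ^ 2) < derivWithin f (Icc 0 r) x ∧
      derivWithin f (Icc 0 r) x < 0 :=
  profile_bounds_general a r hr0 hr1 f hf hconc hpos
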